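/- For every t ∈ ℝ there exists ε > 0 such that for all z ∈ ℂ with |z| < ε, both series below are summable and ∑_{n=1}^∞ t^n · J_n(n·z) = ∑_{n=1}^∞ A_n(t) · z^n. -/

import Mathlib

/-- The Bessel function of the first kind of (integer) order `n`,
defined by its everywhere-convergent power series. -/
noncomputable def besselJ (n : ℕ) (z : ℂ) : ℂ :=
  ∑' j : ℕ, ((-1 : ℂ) ^ j / ((Nat.factorial j : ℂ) * (Nat.factorial (n + j) : ℂ))) *
    (z / 2) ^ (n + 2 * j)

/-- The polynomial `A_n(t) = ((−1)^n/n!) ∑_{k=0}^{⌊n/2⌋} (−1)^k C(n,k) (k − n/2)^n t^{n−2k}`,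
with the convention `A_0 ≡ 0`. -/
noncomputable def A (n : ℕ) (t : ℝ) : ℝ :=
  if n = 0 then 0 else
    ((-1 : ℝ) ^ n / Nat.factorial n) *
      ∑ k ∈ Finset.range (n / 2 + 1),
        (-1 : ℝ) ^ k * (Nat.choose n k) * ((k : ℝ) - n / 2) ^ n * t ^ (n - 2 * k)

/-!
Expanding each `J_n(n z)` in its power series turns the Kapteyn series into a double series
over `(n, j)` whose terms are bounded by `(|t| e |z|)^n (e |z|)^(2j)` (from `N^N ≤ N! e^N` and
`binom N j ≤ 2^N`), so it converges absolutely for small `|z|`. Summing it by rows gives the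
Kapteyn series; summing it along the lines `n + 2j = N` instead collects the coefficient of `z^N`,
which is `A_N(t)` because `(-1)^N (j - N/2)^N = ((N - 2j)/2)^N` and the term `j = N/2` of `A_N`
vanishes.
-/

open Finset Real
open scoped Nat

lemma pow_div_factorial_mul_factorial_le (j l : ℕ) {c : ℝ} (hc₀ : 0 ≤ c) (hc : c ≤ j + l) :
    c ^ (j + l) / (j ! * l ! : ℝ) ≤ (2 * exp 1) ^ (j + l) := by
  have hchoose : ((j + l)! : ℝ) ≤ 2 ^ (j + l) * (j ! * l !) := by
    rw [← Nat.add_choose_mul_factorial_mul_factorial, mul_assoc]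
    exact_mod_cast Nat.mul_le_mul_right _ (Nat.choose_le_two_pow _ _)
  have hpow : c ^ (j + l) ≤ (j + l)! * exp 1 ^ (j + l) := by
    have h := pow_div_factorial_le_exp ((j + l : ℕ) : ℝ) (Nat.cast_nonneg _) (j + l)
    rw [div_le_iff₀ (by positivity), ← exp_one_pow, mul_comm] at h
    exact (pow_le_pow_left₀ hc₀ (by exact_mod_cast hc) _).trans h
  rw [div_le_iff₀ (by positivity)]
  calc c ^ (j + l) ≤ (j + l)! * exp 1 ^ (j + l) := hpow
    _ ≤ 2 ^ (j + l) * (j ! * l !) * exp 1 ^ (j + l) := by gcongr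
    _ = (2 * exp 1) ^ (j + l) * (j ! * l !) := by ring

noncomputable def kapteynTerm (t : ℝ) (z : ℂ) (p : ℕ × ℕ) : ℂ :=
  (t : ℂ) ^ (p.1 + 1) *
    ((-1 : ℂ) ^ p.2 / ((p.2 ! : ℂ) * ((p.1 + 1 + p.2)! : ℂ)) *
      (((p.1 + 1 : ℕ) : ℂ) * z / 2) ^ (p.1 + 1 + 2 * p.2))

lemma tsum_kapteynTerm (t : ℝ) (z : ℂ) (n : ℕ) :
    ∑' j, kapteynTerm t z (n, j) = (t : ℂ) ^ (n + 1) * besselJ (n + 1) ((n + 1 : ℕ) * z) := by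
  rw [besselJ, ← tsum_mul_left]
  rfl

lemma norm_kapteynTerm_le (t : ℝ) (z : ℂ) (n j : ℕ) :
    ‖kapteynTerm t z (n, j)‖ ≤ (|t| * exp 1 * ‖z‖) ^ (n + 1) * ((exp 1 * ‖z‖) ^ 2) ^ j := by
  have hexp : n + 1 + 2 * j = j + (n + 1 + j) := by ring
  have hcoeff := pow_div_factorial_mul_factorial_le j (n + 1 + j) (c := (n + 1 : ℕ))
    (Nat.cast_nonneg _) (by push_cast; linarith)
  rw [← hexp] at hcoeff
  have hnorm : ‖kapteynTerm t z (n, j)‖ = |t| ^ (n + 1) *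
      (((n + 1 : ℕ) : ℝ) ^ (n + 1 + 2 * j) / (j ! * (n + 1 + j)! : ℝ) *
        (‖z‖ / 2) ^ (n + 1 + 2 * j)) := by
    simp only [kapteynTerm, norm_mul, norm_div, norm_pow, norm_neg, norm_one, one_pow,
      Complex.norm_real, Complex.norm_natCast, Complex.norm_ofNat, Real.norm_eq_abs]
    ring
  calc ‖kapteynTerm t z (n, j)‖
      ≤ |t| ^ (n + 1) * ((2 * exp 1) ^ (n + 1 + 2 * j) * (‖z‖ / 2) ^ (n + 1 + 2 * j)) := by
        rw [hnorm]; gcongr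
    _ = (|t| * exp 1 * ‖z‖) ^ (n + 1) * ((exp 1 * ‖z‖) ^ 2) ^ j := by
        rw [← mul_pow, show 2 * exp 1 * (‖z‖ / 2) = exp 1 * ‖z‖ by ring]
        ring

lemma summable_kapteynTerm {t : ℝ} {z : ℂ} (ht : |t| * exp 1 * ‖z‖ < 1) (hz : exp 1 * ‖z‖ < 1) :
    Summable (kapteynTerm t z) := by
  have hrow : Summable fun n : ℕ => (|t| * exp 1 * ‖z‖) ^ (n + 1) :=
    (summable_nat_add_iff 1).2 (summable_geometric_of_lt_one (by positivity) ht)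
  have hcol : Summable fun j : ℕ => ((exp 1 * ‖z‖) ^ 2) ^ j :=
    summable_geometric_of_lt_one (by positivity) (pow_lt_one₀ (by positivity) hz two_ne_zero)
  exact .of_norm_bounded (hrow.mul_of_nonneg hcol (fun _ => by positivity) fun _ => by positivity)
    fun p => norm_kapteynTerm_le t z p.1 p.2

theorem HasSum.sum_range_sub_two_mul {α : Type*} [AddCommMonoid α] [TopologicalSpace α]
    [ContinuousAdd α] [RegularSpace α] {f : ℕ × ℕ → α} {a : α} (hf : HasSum f a) :
    HasSum (fun m => ∑ k ∈ range (m / 2 + 1), f (m - 2 * k, k)) a := by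
  let g : ℕ × ℕ → α := fun q => if 2 * q.2 ≤ q.1 then f (q.1 - 2 * q.2, q.2) else 0
  let i : ℕ × ℕ → ℕ × ℕ := fun p => (p.1 + 2 * p.2, p.2)
  have hi : Function.Injective i := fun p q h => by
    simp only [i, Prod.mk.injEq] at h
    ext <;> omega
  have hg : ∀ q ∉ Set.range i, g q = 0 := fun q hq => if_neg fun h => hq ⟨(q.1 - 2 * q.2, q.2), by
    simp only [i]; ext <;> simp; omega⟩
  have hgi : g ∘ i = f := funext fun p => by simp [g, i]
  refine ((hi.hasSum_iff hg).1 (hgi ▸ hf)).prod_fiberwise fun m => ?_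
  have hrow : ∀ k ∉ range (m / 2 + 1), g (m, k) = 0 := fun k hk => if_neg (by simp at hk; omega)
  convert (hasSum_sum_of_ne_finset_zero hrow : HasSum _ _) using 1
  exact sum_congr rfl fun k hk => (if_pos (by simp at hk; omega)).symm

lemma A_succ (m : ℕ) (t : ℝ) :
    A (m + 1) t = (-1) ^ (m + 1) / (m + 1)! * ∑ k ∈ range (m / 2 + 1), (-1) ^ k *
      (m + 1).choose k * ((k : ℝ) - (m + 1 : ℕ) / 2) ^ (m + 1) * t ^ (m + 1 - 2 * k) := by
  rw [A, if_neg m.succ_ne_zero]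
  congr 1
  rcases Nat.even_or_odd' m with ⟨r, rfl | rfl⟩
  · rw [show (2 * r + 1) / 2 = 2 * r / 2 by omega]
  · rw [show (2 * r + 1 + 1) / 2 = r + 1 by omega, show (2 * r + 1) / 2 = r by omega,
      sum_range_succ, add_eq_left]
    have hmid : ((r + 1 : ℕ) : ℝ) - (2 * r + 1 + 1 : ℕ) / 2 = 0 := by push_cast; ring
    rw [hmid, zero_pow (by omega), mul_zero, zero_mul]

lemma kapteynTerm_eq_coeff_mul_pow (t : ℝ) (z : ℂ) (n k : ℕ) :
    kapteynTerm t z (n, k) = (((-1) ^ (n + 2 * k + 1) / (n + 2 * k + 1)! *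
      ((-1) ^ k * (n + 2 * k + 1).choose k * ((k : ℝ) - (n + 2 * k + 1 : ℕ) / 2) ^ (n + 2 * k + 1) *
        t ^ (n + 2 * k + 1 - 2 * k)) : ℝ) : ℂ) * z ^ (n + 2 * k + 1) := by
  set N := n + 2 * k + 1
  have hsign : ((-1) ^ N * ((k : ℂ) - N / 2) ^ N) = ((n + 1) / 2) ^ N := by
    rw [← mul_pow]; congr 1; push_cast [N]; ring
  rw [kapteynTerm, Nat.cast_choose ℝ (by omega : k ≤ N), show N - k = n + 1 + k by omega,
    show N - 2 * k = n + 1 by omega, show n + 1 + 2 * k = N by omega]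
  push_cast
  have hfac : (N ! : ℂ) ≠ 0 := Nat.cast_ne_zero.2 N.factorial_ne_zero
  calc _ = ((-1) ^ N * ((k : ℂ) - N / 2) ^ N) * ((-1) ^ k / (k ! * (n + 1 + k)!)) *
        t ^ (n + 1) * z ^ N := by
          rw [hsign, show ((n : ℂ) + 1) * z / 2 = (n + 1) / 2 * z by ring, mul_pow]; ring
    _ = _ := by field_simp

lemma sum_kapteynTerm_eq (t : ℝ) (z : ℂ) (m : ℕ) :
    ∑ k ∈ range (m / 2 + 1), kapteynTerm t z (m - 2 * k, k) = (A (m + 1) t : ℂ) * z ^ (m + 1) := by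
  rw [A_succ, Complex.ofReal_mul, Complex.ofReal_sum, mul_sum, sum_mul]
  refine sum_congr rfl fun k hk => ?_
  obtain ⟨n, rfl⟩ : ∃ n, m = n + 2 * k := ⟨m - 2 * k, by simp at hk; omega⟩
  rw [Nat.add_sub_cancel, kapteynTerm_eq_coeff_mul_pow, Complex.ofReal_mul]

theorem kapteyn_power_series (t : ℝ) :
    ∃ ε > 0, ∀ z : ℂ, ‖z‖ < ε →
      Summable (fun n : ℕ => (t : ℂ) ^ (n + 1) * besselJ (n + 1) ((n + 1 : ℕ) * z)) ∧
      Summable (fun n : ℕ => (A (n + 1) t : ℂ) * z ^ (n + 1)) ∧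
      ∑' n : ℕ, (t : ℂ) ^ (n + 1) * besselJ (n + 1) ((n + 1 : ℕ) * z) =
        ∑' n : ℕ, (A (n + 1) t : ℂ) * z ^ (n + 1) := by
  refine ⟨1 / (exp 1 * (|t| + 1)), by positivity, fun z hz => ?_⟩
  have hez : 0 ≤ exp 1 * ‖z‖ := by positivity
  have hz' : ‖z‖ * (exp 1 * (|t| + 1)) < 1 := by rwa [lt_div_iff₀ (by positivity)] at hz
  have hf : Summable (kapteynTerm t z) :=
    summable_kapteynTerm (by nlinarith) (by nlinarith [mul_nonneg hez (abs_nonneg t)])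
  have hbessel : HasSum (fun n : ℕ => (t : ℂ) ^ (n + 1) * besselJ (n + 1) ((n + 1 : ℕ) * z))
      (∑' p, kapteynTerm t z p) := by
    simpa only [tsum_kapteynTerm] using
      hf.hasSum.prod_fiberwise fun n => (hf.prod_factor n).hasSum
  have hpower : HasSum (fun n : ℕ => (A (n + 1) t : ℂ) * z ^ (n + 1))
      (∑' p, kapteynTerm t z p) := by
    simpa only [sum_kapteynTerm_eq] using hf.hasSum.sum_range_sub_two_mul
  exact ⟨hbessel.summable, hpower.summable, hbessel.tsum_eq.trans hpower.tsum_eq.symm⟩
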